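/- arXiv:2503.22611 — 2 statements merged into one kernel-verified Lean document; each statement's English description precedes it below -/
import Mathlib

section
/- Let e and ẽ be two energy forms in the same Hilbert space H with the same form domain H¹ := dom e = dom ẽ. If 0 ≤ δ < 2 and |ẽ(f,u) − e(f,u)| ≤ δ ‖f‖_e ‖u‖_ẽ for all f, u ∈ H¹, then |ẽ(f,f) − e(f,f)| ≤ δ̂ ‖f‖_e² for all f ∈ H¹, where δ̂ = δ √((2+δ)/(2−δ)). -/
open scoped ComplexConjugate

noncomputable section

/-- An energy form in `H` with form domain `D`: a densely defined, closed, non-negative,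
hermitian sesquilinear form (conjugate-linear in the first argument). -/
structure EnergyFormOn (H : Type*) [NormedAddCommGroup H] [InnerProductSpace ℂ H]
    [CompleteSpace H] (D : Submodule ℂ H) where
  dense : Dense (D : Set H)
  form : D → D → ℂ
  linear_right : ∀ f : D, IsLinearMap ℂ (form f)
  conj_symm : ∀ f g : D, form g f = conj (form f g)
  nonneg : ∀ f : D, 0 ≤ (form f f).re
  closed : ∀ f : ℕ → D,
    (∀ ε : ℝ, 0 < ε → ∃ N : ℕ, ∀ p ≥ N, ∀ q ≥ N,
        ‖((f p : H)) - (f q : H)‖ ^ 2 + (form (f p - f q) (f p - f q)).re < ε) →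
    ∃ g : D, Filter.Tendsto
        (fun n => ‖((f n : H)) - (g : H)‖ ^ 2 + (form (f n - g) (f n - g)).re)
        Filter.atTop (nhds 0)

/-- The form norm `‖f‖_e = (‖f‖² + e(f,f))^{1/2}`. -/
def EnergyFormOn.enorm {H : Type*} [NormedAddCommGroup H] [InnerProductSpace ℂ H]
    [CompleteSpace H] {D : Submodule ℂ H} (E : EnergyFormOn H D) (f : D) : ℝ :=
  Real.sqrt (‖(f : H)‖ ^ 2 + (E.form f f).re)

/-! The off-diagonal bound at `u = f` gives `ẽ(f,f) ≤ e(f,f) + δ ‖f‖_e ‖f‖_ẽ`, hence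
`‖f‖_ẽ² ≤ ‖f‖_e² + δ ‖f‖_e ‖f‖_ẽ`. With `2 ‖f‖_e ‖f‖_ẽ ≤ ‖f‖_e² + ‖f‖_ẽ²` this yields
`‖f‖_ẽ ≤ √((2+δ)/(2−δ)) ‖f‖_e`, and inserting this into the off-diagonal bound once more gives
the claim. -/

theorem le_mul_sqrt_of_sq_le_sq_add_mul {a b δ : ℝ} (ha : 0 ≤ a) (hδ0 : 0 ≤ δ) (hδ2 : δ < 2)
    (h : b ^ 2 ≤ a ^ 2 + δ * a * b) : b ≤ a * Real.sqrt ((2 + δ) / (2 - δ)) := by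
  have h2δ : 0 < 2 - δ := by linarith
  have hsq : b ^ 2 ≤ a ^ 2 * ((2 + δ) / (2 - δ)) := by
    rw [← mul_div_assoc, le_div_iff₀ h2δ]
    nlinarith [mul_nonneg hδ0 (sq_nonneg (a - b))]
  calc b ≤ |b| := le_abs_self b
    _ ≤ Real.sqrt (a ^ 2 * ((2 + δ) / (2 - δ))) := Real.abs_le_sqrt hsq
    _ = a * Real.sqrt ((2 + δ) / (2 - δ)) := by
      rw [Real.sqrt_mul (sq_nonneg a), Real.sqrt_sq ha]

namespace EnergyFormOn

variable {H : Type*} [NormedAddCommGroup H] [InnerProductSpace ℂ H] [CompleteSpace H]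
  {D : Submodule ℂ H}

theorem enorm_nonneg (E : EnergyFormOn H D) (f : D) : 0 ≤ E.enorm f :=
  Real.sqrt_nonneg _

theorem enorm_sq (E : EnergyFormOn H D) (f : D) :
    E.enorm f ^ 2 = ‖(f : H)‖ ^ 2 + (E.form f f).re :=
  Real.sq_sqrt (add_nonneg (sq_nonneg _) (E.nonneg f))

theorem enorm_sq_le_enorm_sq_add_norm_sub (E Et : EnergyFormOn H D) (f : D) :
    Et.enorm f ^ 2 ≤ E.enorm f ^ 2 + ‖Et.form f f - E.form f f‖ := by
  have hre := Complex.re_le_norm (Et.form f f - E.form f f)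
  rw [Complex.sub_re] at hre
  rw [enorm_sq, enorm_sq]
  linarith

end EnergyFormOn

/-- Let `e` and `ẽ` be two energy forms in the same Hilbert space `H`
with the same form domain `H¹ = D`.  If `0 ≤ δ < 2` and
`|ẽ(f,u) − e(f,u)| ≤ δ ‖f‖_e ‖u‖_ẽ` for all `f, u ∈ H¹`, then
`|ẽ(f,f) − e(f,f)| ≤ δ̂ ‖f‖_e²` for all `f ∈ H¹`, where `δ̂ = δ √((2+δ)/(2−δ))`. -/
theorem form_close_diag_of_offdiag
    {H : Type*} [NormedAddCommGroup H] [InnerProductSpace ℂ H] [CompleteSpace H]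
    {D : Submodule ℂ H} (E Et : EnergyFormOn H D)
    (δ : ℝ) (hδ0 : 0 ≤ δ) (hδ2 : δ < 2)
    (h : ∀ f u : D, ‖Et.form f u - E.form f u‖ ≤ δ * E.enorm f * Et.enorm u) :
    ∀ f : D, ‖Et.form f f - E.form f f‖ ≤
      (δ * Real.sqrt ((2 + δ) / (2 - δ))) * E.enorm f ^ 2 := by
  intro f
  have hEt : Et.enorm f ≤ E.enorm f * Real.sqrt ((2 + δ) / (2 - δ)) :=
    le_mul_sqrt_of_sq_le_sq_add_mul (E.enorm_nonneg f) hδ0 hδ2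
      ((E.enorm_sq_le_enorm_sq_add_norm_sub Et f).trans (add_le_add_right (h f f) _))
  calc ‖Et.form f f - E.form f f‖ ≤ δ * E.enorm f * Et.enorm f := h f f
    _ ≤ δ * E.enorm f * (E.enorm f * Real.sqrt ((2 + δ) / (2 - δ))) :=
      mul_le_mul_of_nonneg_left hEt (mul_nonneg hδ0 (E.enorm_nonneg f))
    _ = (δ * Real.sqrt ((2 + δ) / (2 - δ))) * E.enorm f ^ 2 := by ring

end
end

section
/- Graph-norm variant of closeness (as used for Neumann obstacles): let e in H and ẽ in H̃ be energy forms with associated operators Δ and Δ̃, and let J, J', J¹, J'¹ satisfy conditions (a), (b), (c) of δ-quasi-unitary equivalence together with the graph-norm closeness condition |ẽ(J¹f, u) − e(f, J'¹u)| ≤ δ ‖(Δ+1)f‖_H ‖u‖_ẽ for all f ∈ dom Δ and u ∈ H̃¹. Then ‖(Δ̃+1)⁻¹J − J(Δ+1)⁻¹‖ ≤ 4δ, and the operators Δ and Δ̃ are 4δ-operator-quasi-unitarily equivalent with identification operators J and J'. -/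
open scoped ComplexConjugate

noncomputable section

/-- A non-negative self-adjoint operator in a complex Hilbert space `H`, packaged as a
densely defined symmetric non-negative operator together with its (everywhere defined,
bounded) resolvent `res = (Δ + 1)⁻¹`. -/
structure NonnegOp (H : Type*) [NormedAddCommGroup H] [InnerProductSpace ℂ H]
    [CompleteSpace H] where
  domain : Submodule ℂ H
  dense : Dense (domain : Set H)
  op : domain →ₗ[ℂ] H
  symm : ∀ f g : domain, (inner ℂ (op f) (g : H) : ℂ) = inner ℂ (f : H) (op g)
  nonneg : ∀ f : domain, 0 ≤ (inner ℂ (op f) (f : H) : ℂ).re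
  res : H →L[ℂ] H
  res_mem : ∀ u : H, res u ∈ domain
  op_res : ∀ u : H, op ⟨res u, res_mem u⟩ + res u = u
  res_op : ∀ f : domain, res (op f + (f : H)) = f

/-- `Rz` is the resolvent `(Δ - z)⁻¹` of the operator `T` at the point `z`. -/
structure IsResolventAt {H : Type*} [NormedAddCommGroup H] [InnerProductSpace ℂ H]
    [CompleteSpace H] (T : NonnegOp H) (z : ℂ) (Rz : H →L[ℂ] H) : Prop where
  mem : ∀ u : H, Rz u ∈ T.domain
  right_inv : ∀ u : H, T.op ⟨Rz u, mem u⟩ - z • Rz u = u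
  left_inv : ∀ f : T.domain, Rz (T.op f - z • (f : H)) = f

/-- The spectrum of `T`: the set of `z : ℂ` at which no bounded resolvent exists. -/
def NonnegOp.spec {H : Type*} [NormedAddCommGroup H] [InnerProductSpace ℂ H]
    [CompleteSpace H] (T : NonnegOp H) : Set ℂ :=
  {z | ¬ ∃ Rz : H →L[ℂ] H, IsResolventAt T z Rz}


/-- `T` is the non-negative self-adjoint operator associated with the energy form `E`
(first representation theorem). -/
structure IsAssociatedOp {H : Type*} [NormedAddCommGroup H] [InnerProductSpace ℂ H]
    [CompleteSpace H] {D : Submodule ℂ H} (E : EnergyFormOn H D) (T : NonnegOp H) : Prop where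
  le : T.domain ≤ D
  compat : ∀ (f : T.domain) (u : D),
    E.form ⟨(f : H), le f.2⟩ u = (inner ℂ (T.op f) (u : H) : ℂ)


/-- `δ`-quasi-unitary equivalence of the energy forms `E` and `E'` with identification
operators `J`, `J'` (on the Hilbert spaces) and `J1`, `J1'` (on the form domains). -/
structure FormQUE {H H' : Type*} [NormedAddCommGroup H] [InnerProductSpace ℂ H]
    [CompleteSpace H] [NormedAddCommGroup H'] [InnerProductSpace ℂ H'] [CompleteSpace H']
    {D : Submodule ℂ H} {D' : Submodule ℂ H'}
    (E : EnergyFormOn H D) (E' : EnergyFormOn H' D') (δ : ℝ)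
    (J : H →L[ℂ] H') (J' : H' →L[ℂ] H)
    (J1 : D →ₗ[ℂ] D') (J1' : D' →ₗ[ℂ] D) : Prop where
  bounded : ∀ f : H, ‖J f‖ ≤ (1 + δ) * ‖f‖
  almost_adjoint : ∀ (f : H) (u : H'),
    ‖(inner ℂ (J f) u : ℂ) - (inner ℂ f (J' u) : ℂ)‖ ≤ δ * ‖f‖ * ‖u‖
  inv_left : ∀ f : D, ‖(f : H) - J' (J (f : H))‖ ≤ δ * E.enorm f
  inv_right : ∀ u : D', ‖(u : H') - J (J' (u : H'))‖ ≤ δ * E'.enorm u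
  compat_left : ∀ f : D, ‖((J1 f : H')) - J (f : H)‖ ≤ δ * E.enorm f
  compat_right : ∀ u : D', ‖((J1' u : H)) - J' (u : H')‖ ≤ δ * E'.enorm u
  close : ∀ (f : D) (u : D'),
    ‖E'.form (J1 f) u - E.form f (J1' u)‖ ≤ δ * E.enorm f * E'.enorm u


/-- `δ`-operator-quasi-unitary equivalence of `T` and `T'` with identification
operators `J` and `J'`. -/
structure OpQUE {H H' : Type*} [NormedAddCommGroup H] [InnerProductSpace ℂ H]
    [CompleteSpace H] [NormedAddCommGroup H'] [InnerProductSpace ℂ H'] [CompleteSpace H']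
    (T : NonnegOp H) (T' : NonnegOp H') (δ : ℝ)
    (J : H →L[ℂ] H') (J' : H' →L[ℂ] H) : Prop where
  norm_J : ‖J‖ ≤ 1 + δ
  adjoint_close : ‖ContinuousLinearMap.adjoint J - J'‖ ≤ δ
  inv_left : ‖(ContinuousLinearMap.id ℂ H - J'.comp J).comp T.res‖ ≤ δ
  inv_right : ‖(ContinuousLinearMap.id ℂ H' - J.comp J').comp T'.res‖ ≤ δ
  intertwine : ‖T'.res.comp J - J.comp T.res‖ ≤ δ


/-!
For `f ∈ H`, `w ∈ H̃` put `g = (Δ+1)⁻¹ f` and `u = (Δ̃+1)⁻¹ w`. Then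
`⟪((Δ̃+1)⁻¹ J - J (Δ+1)⁻¹) f, w⟫ = ⟪J f, u⟫ - ⟪J g, w⟫`, and since `f - g = Δ g`, `w - u = Δ̃ u`,
this equals
`(⟪J (f - g), u⟫ - ⟪f - g, J' u⟫) + ⟪f - g, J' u - J'¹ u⟫ + ⟪J¹ g - J g, w - u⟫
  + (e(g, J'¹ u) - ẽ(J¹ g, u))`.
Each term is at most `δ ‖f‖ ‖w‖`, by (a), (c) for `J'¹`, (c) for `J¹` and the graph-norm
closeness respectively, because `(Δ+1)⁻¹` is a contraction with `‖f - g‖ ≤ ‖f‖`, `‖g‖_e ≤ ‖f‖` and `(Δ+1) g = f`.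
The remaining conditions of operator-quasi-unitary equivalence follow from (a) and (b) since
`(Δ+1)⁻¹` maps `H` into `H¹` with norm at most `1`.
-/

section InnerBounds

variable {H H' : Type*} [NormedAddCommGroup H] [InnerProductSpace ℂ H]
  [NormedAddCommGroup H'] [InnerProductSpace ℂ H']

lemma norm_le_of_forall_norm_inner_le {v : H} {C : ℝ} (hC : 0 ≤ C)
    (h : ∀ x : H, ‖(inner ℂ v x : ℂ)‖ ≤ C * ‖x‖) : ‖v‖ ≤ C := by
  have hvv : ‖v‖ ^ 2 ≤ C * ‖v‖ := by
    simpa [inner_self_eq_norm_mul_norm] using h v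
  by_contra! hlt
  nlinarith [norm_nonneg v]

lemma ContinuousLinearMap.opNorm_le_of_forall_norm_inner_le {A : H →L[ℂ] H'} {C : ℝ}
    (hC : 0 ≤ C) (h : ∀ f w, ‖(inner ℂ (A f) w : ℂ)‖ ≤ C * ‖f‖ * ‖w‖) : ‖A‖ ≤ C :=
  A.opNorm_le_bound hC fun f =>
    norm_le_of_forall_norm_inner_le (by positivity) fun w => h f w

lemma norm_inner_le_of_le {x y : H} {a b : ℝ} (hx : ‖x‖ ≤ a) (hy : ‖y‖ ≤ b) :
    ‖(inner ℂ x y : ℂ)‖ ≤ a * b :=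
  (norm_inner_le_norm x y).trans
    (mul_le_mul hx hy (norm_nonneg _) ((norm_nonneg _).trans hx))

lemma ContinuousLinearMap.norm_adjoint_sub_le [CompleteSpace H] [CompleteSpace H']
    {J : H →L[ℂ] H'} {J' : H' →L[ℂ] H} {δ : ℝ} (hδ : 0 ≤ δ)
    (h : ∀ (f : H) (u : H'),
      ‖(inner ℂ (J f) u : ℂ) - (inner ℂ f (J' u) : ℂ)‖ ≤ δ * ‖f‖ * ‖u‖) :
    ‖ContinuousLinearMap.adjoint J - J'‖ ≤ δ := by
  refine opNorm_le_of_forall_norm_inner_le hδ fun u f => ?_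
  have hconj : (inner ℂ ((ContinuousLinearMap.adjoint J - J') u) f : ℂ)
      = conj ((inner ℂ (J f) u : ℂ) - inner ℂ f (J' u)) := by
    rw [sub_apply, inner_sub_left, adjoint_inner_left, map_sub, inner_conj_symm,
      inner_conj_symm]
  rw [hconj, RCLike.norm_conj]
  linarith [h f u]

lemma inner_sub_inner_eq (J : H →L[ℂ] H') (J' : H' → H) (f g b : H) (u w a : H') :
    (inner ℂ (J f) u : ℂ) - inner ℂ (J g) w
      = ((inner ℂ (J (f - g)) u : ℂ) - inner ℂ (f - g) (J' u))
        + inner ℂ (f - g) (J' u - b) + inner ℂ (a - J g) (w - u)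
        + (inner ℂ (f - g) b - inner ℂ a (w - u)) := by
  simp only [map_sub, inner_sub_left, inner_sub_right]
  ring

end InnerBounds

section Resolvent

variable {H : Type*} [NormedAddCommGroup H] [InnerProductSpace ℂ H] [CompleteSpace H]

namespace NonnegOp

variable (T : NonnegOp H)

lemma inner_res_left (x y : H) :
    (inner ℂ (T.res x) y : ℂ) = inner ℂ x (T.res y) := by
  calc (inner ℂ (T.res x) y : ℂ)
      = inner ℂ (T.res x) (T.op ⟨T.res y, T.res_mem y⟩ + T.res y) := by rw [T.op_res]
    _ = inner ℂ (T.op ⟨T.res x, T.res_mem x⟩ + T.res x) (T.res y) := by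
      rw [inner_add_right, inner_add_left]
      exact congrArg (· + _) (T.symm ⟨_, T.res_mem x⟩ ⟨_, T.res_mem y⟩).symm
    _ = inner ℂ x (T.res y) := by rw [T.op_res]

lemma re_inner_self_res (f : H) : (inner ℂ (T.res f) (T.res f) : ℂ).re = ‖T.res f‖ ^ 2 :=
  inner_self_eq_norm_sq (𝕜 := ℂ) _

lemma norm_res_sq_le_re_inner (f : H) :
    ‖T.res f‖ ^ 2 ≤ (inner ℂ f (T.res f) : ℂ).re := by
  have hsplit : (inner ℂ f (T.res f) : ℂ)
      = inner ℂ (T.op ⟨T.res f, T.res_mem f⟩) (T.res f) + inner ℂ (T.res f) (T.res f) := by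
    rw [← inner_add_left, T.op_res]
  rw [hsplit, Complex.add_re, T.re_inner_self_res]
  linarith [T.nonneg ⟨T.res f, T.res_mem f⟩]

lemma norm_res_le (f : H) : ‖T.res f‖ ≤ ‖f‖ := by
  have hCS : (inner ℂ f (T.res f) : ℂ).re ≤ ‖f‖ * ‖T.res f‖ :=
    (Complex.re_le_norm _).trans (norm_inner_le_norm _ _)
  nlinarith [T.norm_res_sq_le_re_inner f, norm_nonneg (T.res f), norm_nonneg f]

lemma re_inner_res_le (f : H) : (inner ℂ f (T.res f) : ℂ).re ≤ ‖f‖ ^ 2 :=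
  calc (inner ℂ f (T.res f) : ℂ).re ≤ ‖f‖ * ‖T.res f‖ :=
        (Complex.re_le_norm _).trans (norm_inner_le_norm _ _)
    _ ≤ ‖f‖ * ‖f‖ := by gcongr; exact T.norm_res_le f
    _ = ‖f‖ ^ 2 := (sq _).symm

lemma norm_sub_res_le (f : H) : ‖f - T.res f‖ ≤ ‖f‖ := by
  have hexp : ‖f - T.res f‖ ^ 2
      = ‖f‖ ^ 2 - 2 * (inner ℂ f (T.res f) : ℂ).re + ‖T.res f‖ ^ 2 := by
    simpa using norm_sub_sq (𝕜 := ℂ) f (T.res f)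
  have hsq : ‖f - T.res f‖ ^ 2 ≤ ‖f‖ ^ 2 := by
    nlinarith [T.norm_res_sq_le_re_inner f, sq_nonneg ‖T.res f‖]
  exact (pow_le_pow_iff_left₀ (norm_nonneg _) (norm_nonneg _) two_ne_zero).mp hsq

end NonnegOp

namespace IsAssociatedOp

variable {D : Submodule ℂ H} {E : EnergyFormOn H D} {T : NonnegOp H}
  (hT : IsAssociatedOp E T)
include hT

def resForm (f : H) : D := ⟨T.res f, hT.le (T.res_mem f)⟩

lemma inner_sub_res_eq_form (f : H) (v : D) :
    (inner ℂ (f - T.res f) (v : H) : ℂ) = E.form (hT.resForm f) v := by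
  rw [← eq_sub_of_add_eq (T.op_res f)]
  exact (hT.compat _ v).symm

lemma inner_sub_res_eq_form' (v : D) (f : H) :
    (inner ℂ (v : H) (f - T.res f) : ℂ) = E.form v (hT.resForm f) := by
  rw [← inner_conj_symm, hT.inner_sub_res_eq_form, E.conj_symm, Complex.conj_conj]

lemma enorm_resForm_le (f : H) : E.enorm (hT.resForm f) ≤ ‖f‖ := by
  have hsq : ‖T.res f‖ ^ 2 + (E.form (hT.resForm f) (hT.resForm f)).re
      = (inner ℂ f (T.res f) : ℂ).re := by
    rw [← hT.inner_sub_res_eq_form, inner_sub_left, Complex.sub_re]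
    simp only [resForm, T.re_inner_self_res]
    ring
  refine Real.sqrt_le_iff.mpr ⟨norm_nonneg f, ?_⟩
  exact hsq ▸ T.re_inner_res_le f

lemma opNorm_comp_res_le {K : Type*} [NormedAddCommGroup K] [InnerProductSpace ℂ K]
    {B : H →L[ℂ] K} {δ : ℝ} (hδ : 0 ≤ δ) (hB : ∀ f : D, ‖B f‖ ≤ δ * E.enorm f) :
    ‖B.comp T.res‖ ≤ δ :=
  ContinuousLinearMap.opNorm_le_bound _ hδ fun f =>
    (hB (hT.resForm f)).trans (mul_le_mul_of_nonneg_left (hT.enorm_resForm_le f) hδ)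

end IsAssociatedOp

end Resolvent

section GraphNormCloseness

variable {H H' : Type*} [NormedAddCommGroup H] [InnerProductSpace ℂ H] [CompleteSpace H]
  [NormedAddCommGroup H'] [InnerProductSpace ℂ H'] [CompleteSpace H']
  {D : Submodule ℂ H} {D' : Submodule ℂ H'} {E : EnergyFormOn H D} {E' : EnergyFormOn H' D'}
  {T : NonnegOp H} {T' : NonnegOp H'} {δ : ℝ}
  {J : H →L[ℂ] H'} {J' : H' →L[ℂ] H} {J1 : D →ₗ[ℂ] D'} {J1' : D' →ₗ[ℂ] D}

lemma norm_res_comp_sub_comp_res_le (hT : IsAssociatedOp E T) (hT' : IsAssociatedOp E' T')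
    (hδ : 0 ≤ δ)
    (ha2 : ∀ (f : H) (u : H'),
      ‖(inner ℂ (J f) u : ℂ) - (inner ℂ f (J' u) : ℂ)‖ ≤ δ * ‖f‖ * ‖u‖)
    (hc1 : ∀ f : D, ‖((J1 f : H')) - J (f : H)‖ ≤ δ * E.enorm f)
    (hc2 : ∀ u : D', ‖((J1' u : H)) - J' (u : H')‖ ≤ δ * E'.enorm u)
    (hd' : ∀ (f : T.domain) (u : D'),
      ‖E'.form (J1 ⟨(f : H), hT.le f.2⟩) u - E.form ⟨(f : H), hT.le f.2⟩ (J1' u)‖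
        ≤ δ * ‖T.op f + (f : H)‖ * E'.enorm u) :
    ‖T'.res.comp J - J.comp T.res‖ ≤ 4 * δ := by
  refine ContinuousLinearMap.opNorm_le_of_forall_norm_inner_le (by positivity) fun f w => ?_
  set g := hT.resForm f
  set u := hT'.resForm w
  have hsplit : (inner ℂ ((T'.res.comp J - J.comp T.res) f) w : ℂ)
      = ((inner ℂ (J (f - T.res f)) (T'.res w) : ℂ) - inner ℂ (f - T.res f) (J' (T'.res w)))
        + inner ℂ (f - T.res f) (J' (T'.res w) - J1' u)
        + inner ℂ ((J1 g : H') - J (T.res f)) (w - T'.res w)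
        + (E.form g (J1' u) - E'.form (J1 g) u) := by
    rw [sub_apply, ContinuousLinearMap.comp_apply,
      ContinuousLinearMap.comp_apply, inner_sub_left, T'.inner_res_left,
      inner_sub_inner_eq J J' f (T.res f) (J1' u) (T'.res w) w (J1 g),
      hT.inner_sub_res_eq_form, hT'.inner_sub_res_eq_form']
  have hfg := T.norm_sub_res_le f
  have hwu := T'.norm_sub_res_le w
  have hge : E.enorm g ≤ ‖f‖ := hT.enorm_resForm_le f
  have hue : E'.enorm u ≤ ‖w‖ := hT'.enorm_resForm_le w
  have hJ : ‖(inner ℂ (J (f - T.res f)) (T'.res w) : ℂ) - inner ℂ (f - T.res f) (J' (T'.res w))‖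
      ≤ δ * ‖f‖ * ‖w‖ :=
    (ha2 _ _).trans (by gcongr; exact T'.norm_res_le w)
  have hJ1' : ‖(inner ℂ (f - T.res f) (J' (T'.res w) - J1' u) : ℂ)‖ ≤ ‖f‖ * (δ * ‖w‖) :=
    norm_inner_le_of_le hfg (by rw [norm_sub_rev]; exact (hc2 u).trans (by gcongr))
  have hJ1 : ‖(inner ℂ ((J1 g : H') - J (T.res f)) (w - T'.res w) : ℂ)‖ ≤ δ * ‖f‖ * ‖w‖ :=
    norm_inner_le_of_le ((hc1 g).trans (by gcongr)) hwu
  have hclose : ‖E.form g (J1' u) - E'.form (J1 g) u‖ ≤ δ * ‖f‖ * ‖w‖ := by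
    have h := hd' ⟨T.res f, T.res_mem f⟩ u
    simp only [T.op_res] at h
    rw [norm_sub_rev]
    exact h.trans (by gcongr)
  calc ‖(inner ℂ ((T'.res.comp J - J.comp T.res) f) w : ℂ)‖
      ≤ δ * ‖f‖ * ‖w‖ + ‖f‖ * (δ * ‖w‖) + δ * ‖f‖ * ‖w‖ + δ * ‖f‖ * ‖w‖ := by
        rw [hsplit]
        exact norm_add₄_le.trans (by gcongr)
    _ = 4 * δ * ‖f‖ * ‖w‖ := by ring

end GraphNormCloseness

/-- **Statement 19** (Graph-norm variant of closeness, as used for Neumann obstacles,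
cf. [Anné–Post, Thm. 4.3]).  Let `E`, `E'` be energy forms with associated operators
`Δ = T`, `Δ̃ = T'`, and let `J`, `J'`, `J¹ = J1`, `J'¹ = J1'` satisfy conditions (a),
(b), (c) of `δ`-quasi-unitary equivalence together with the graph-norm closeness
condition `|ẽ(J¹f, u) − e(f, J'¹u)| ≤ δ ‖(Δ+1)f‖ ‖u‖_ẽ` for all `f ∈ dom Δ`,
`u ∈ H̃¹`.  Then `‖(Δ̃+1)⁻¹J − J(Δ+1)⁻¹‖ ≤ 4δ` and the operators `Δ`, `Δ̃` are
`4δ`-operator-quasi-unitarily equivalent with identification operators `J`, `J'`. -/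
theorem graph_norm_closeness_opQUE
    {H H' : Type*}
    [NormedAddCommGroup H] [InnerProductSpace ℂ H] [CompleteSpace H]
    [NormedAddCommGroup H'] [InnerProductSpace ℂ H'] [CompleteSpace H']
    {D : Submodule ℂ H} {D' : Submodule ℂ H'}
    (E : EnergyFormOn H D) (E' : EnergyFormOn H' D')
    (T : NonnegOp H) (T' : NonnegOp H')
    (hT : IsAssociatedOp E T) (hT' : IsAssociatedOp E' T')
    (δ : ℝ) (hδ : 0 ≤ δ)
    (J : H →L[ℂ] H') (J' : H' →L[ℂ] H) (J1 : D →ₗ[ℂ] D') (J1' : D' →ₗ[ℂ] D)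
    (ha1 : ∀ f : H, ‖J f‖ ≤ (1 + δ) * ‖f‖)
    (ha2 : ∀ (f : H) (u : H'),
      ‖(inner ℂ (J f) u : ℂ) - (inner ℂ f (J' u) : ℂ)‖ ≤ δ * ‖f‖ * ‖u‖)
    (hb1 : ∀ f : D, ‖(f : H) - J' (J (f : H))‖ ≤ δ * E.enorm f)
    (hb2 : ∀ u : D', ‖(u : H') - J (J' (u : H'))‖ ≤ δ * E'.enorm u)
    (hc1 : ∀ f : D, ‖((J1 f : H')) - J (f : H)‖ ≤ δ * E.enorm f)
    (hc2 : ∀ u : D', ‖((J1' u : H)) - J' (u : H')‖ ≤ δ * E'.enorm u)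
    (hd' : ∀ (f : T.domain) (u : D'),
      ‖E'.form (J1 ⟨(f : H), hT.le f.2⟩) u
          - E.form ⟨(f : H), hT.le f.2⟩ (J1' u)‖
        ≤ δ * ‖T.op f + (f : H)‖ * E'.enorm u) :
    ‖T'.res.comp J - J.comp T.res‖ ≤ 4 * δ ∧ OpQUE T T' (4 * δ) J J' := by
  have hδ4 : δ ≤ 4 * δ := by linarith
  have hres := norm_res_comp_sub_comp_res_le hT hT' hδ ha2 hc1 hc2 hd'
  refine ⟨hres, ⟨?_, ?_, ?_, ?_, hres⟩⟩
  · exact (J.opNorm_le_bound (by positivity) ha1).trans (by linarith)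
  · exact (ContinuousLinearMap.norm_adjoint_sub_le hδ ha2).trans hδ4
  · exact (hT.opNorm_comp_res_le hδ hb1).trans hδ4
  · exact (hT'.opNorm_comp_res_le hδ hb2).trans hδ4

end
end
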